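/- If X = (X₁,X₂) has the bivariate skew normal distribution SN₂(θ⃗, R) with density 2φ₂(x,R)Φ(θ⃗ᵀx), correlation matrix R with off-diagonal ρ and θ⃗ = (θ,θ), then the marginal distribution of X₁ is univariate skew normal SN(λ) with λ = θ(1+ρ)/√(1+θ²(1-ρ²)), i.e. X₁ has density 2φ(x)Φ(λx). -/
import Mathlib

open Real MeasureTheory Filter Set

noncomputable def stdNormalPdf (t : ℝ) : ℝ := (Real.sqrt (2 * π))⁻¹ * Real.exp (-t ^ 2 / 2)

noncomputable def stdNormalCdf (z : ℝ) : ℝ := ∫ t in Set.Iic z, stdNormalPdf t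

noncomputable def biNormalPdf (r : ℝ) (p : ℝ × ℝ) : ℝ :=
  (2 * π * Real.sqrt (1 - r ^ 2))⁻¹ *
    Real.exp (-(p.1 ^ 2 - 2 * r * p.1 * p.2 + p.2 ^ 2) / (2 * (1 - r ^ 2)))

/-- Bivariate skew normal SN₂((θ,θ), R) density, R = [[1,ρ],[ρ,1]]. -/
noncomputable def biSkewNormalPdf (θ ρ : ℝ) (p : ℝ × ℝ) : ℝ :=
  2 * biNormalPdf ρ p * stdNormalCdf (θ * p.1 + θ * p.2)

lemma sNP_nonneg (t : ℝ) : 0 ≤ stdNormalPdf t := by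
  unfold stdNormalPdf
  positivity

lemma sNP_eq (t : ℝ) : stdNormalPdf t = (Real.sqrt (2 * π))⁻¹ * Real.exp (-(1/2) * t ^ 2) := by
  unfold stdNormalPdf; ring_nf

lemma sNP_fun_eq : stdNormalPdf = fun t => (Real.sqrt (2 * π))⁻¹ * Real.exp (-(1/2) * t ^ 2) :=
  funext sNP_eq

lemma sNP_integrable : Integrable stdNormalPdf := by
  rw [sNP_fun_eq]
  exact (integrable_exp_neg_mul_sq (by norm_num)).const_mul (Real.sqrt (2 * π))⁻¹

lemma sqrt_two_pi_pos : 0 < Real.sqrt (2 * π) :=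
  Real.sqrt_pos.2 (by positivity)

lemma sNP_integral : ∫ t, stdNormalPdf t = 1 := by
  have h : ∫ t : ℝ, Real.exp (-(1/2) * t ^ 2) = Real.sqrt (π / (1/2)) := integral_gaussian (1/2)
  have h2 : Real.sqrt (π / (1/2)) = Real.sqrt (2 * π) := by norm_num [mul_comm]
  rw [sNP_fun_eq, MeasureTheory.integral_const_mul, h, h2,
    inv_mul_cancel₀ (ne_of_gt sqrt_two_pi_pos)]

lemma cdf_nonneg (z : ℝ) : 0 ≤ stdNormalCdf z :=
  setIntegral_nonneg measurableSet_Iic fun t _ => sNP_nonneg t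

lemma cdf_le_one (z : ℝ) : stdNormalCdf z ≤ 1 := by
  rw [← sNP_integral]
  exact setIntegral_le_integral sNP_integrable (Filter.Eventually.of_forall sNP_nonneg)

/-- Translation in the cdf. -/
lemma cdf_shift (z d : ℝ) : ∫ s in Iic z, stdNormalPdf (s + d) = stdNormalCdf (z + d) := by
  have h1 : ∀ s : ℝ, (Iic z).indicator (fun s => stdNormalPdf (s + d)) s
      = (Iic (z + d)).indicator stdNormalPdf (s + d) := by
    intro s
    by_cases hs : s ≤ z
    · rw [indicator_of_mem (mem_Iic.2 hs), indicator_of_mem (mem_Iic.2 (by linarith))]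
    · rw [indicator_of_notMem (by simpa using hs), indicator_of_notMem (by simp; linarith)]
  rw [← integral_indicator measurableSet_Iic]
  unfold stdNormalCdf
  rw [← integral_indicator measurableSet_Iic]
  calc ∫ s, (Iic z).indicator (fun s => stdNormalPdf (s + d)) s
      = ∫ s, (Iic (z + d)).indicator stdNormalPdf (s + d) := by
        exact integral_congr_ae (Filter.Eventually.of_forall h1)
    _ = ∫ s, (Iic (z + d)).indicator stdNormalPdf s :=
        MeasureTheory.integral_add_right_eq_self _ d

/-- Scaling in the cdf. -/
lemma cdf_scale (z c : ℝ) (hc : 0 < c) :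
    ∫ s in Iic z, c⁻¹ * stdNormalPdf (s / c) = stdNormalCdf (z / c) := by
  have h1 : ∀ s : ℝ, (Iic z).indicator (fun s => c⁻¹ * stdNormalPdf (s / c)) s
      = c⁻¹ * (Iic (z / c)).indicator stdNormalPdf (s / c) := by
    intro s
    by_cases hs : s ≤ z
    · rw [indicator_of_mem (mem_Iic.2 hs),
        indicator_of_mem (mem_Iic.2 (div_le_div_of_nonneg_right hs hc.le))]
    · rw [indicator_of_notMem (by simpa using hs),
        indicator_of_notMem (by simp only [mem_Iic, not_le] at hs ⊢; gcongr), mul_zero]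
  rw [← integral_indicator measurableSet_Iic]
  unfold stdNormalCdf
  rw [← integral_indicator measurableSet_Iic]
  calc ∫ s, (Iic z).indicator (fun s => c⁻¹ * stdNormalPdf (s / c)) s
      = ∫ s, c⁻¹ * (Iic (z / c)).indicator stdNormalPdf (s / c) :=
        integral_congr_ae (Filter.Eventually.of_forall h1)
    _ = c⁻¹ * ∫ s, (Iic (z / c)).indicator stdNormalPdf (s / c) :=
        MeasureTheory.integral_const_mul _ _
    _ = c⁻¹ * (|c| • ∫ s, (Iic (z / c)).indicator stdNormalPdf s) := by
        rw [MeasureTheory.Measure.integral_comp_div]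
    _ = ∫ s, (Iic (z / c)).indicator stdNormalPdf s := by
        rw [abs_of_pos hc, smul_eq_mul, ← mul_assoc, inv_mul_cancel₀ (ne_of_gt hc), one_mul]

/-- Gaussian translate integral. -/
lemma gauss_translate (k m : ℝ) (hk : 0 < k) :
    ∫ u : ℝ, Real.exp (-(k/2) * (u + m) ^ 2) = Real.sqrt (2 * π / k) := by
  have := MeasureTheory.integral_add_right_eq_self (μ := volume) (fun u => Real.exp (-(k/2) * u ^ 2)) m
  rw [this, integral_gaussian]
  congr 1
  field_simp

/-- The product of two Gaussians integrates to a Gaussian. -/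
lemma gauss_product (b s : ℝ) :
    ∫ u : ℝ, stdNormalPdf u * stdNormalPdf (s + b * u)
      = (Real.sqrt (1 + b ^ 2))⁻¹ * stdNormalPdf (s / Real.sqrt (1 + b ^ 2)) := by
  set c : ℝ := Real.sqrt (1 + b ^ 2) with hcdef
  have hc2 : c ^ 2 = 1 + b ^ 2 := Real.sq_sqrt (by positivity)
  have hc : 0 < c := Real.sqrt_pos.2 (by positivity)
  have key : ∀ u : ℝ, stdNormalPdf u * stdNormalPdf (s + b * u)
      = ((Real.sqrt (2 * π))⁻¹ * (Real.sqrt (2 * π))⁻¹ * Real.exp (-s ^ 2 / (2 * c ^ 2))) *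
        Real.exp (-(c ^ 2 / 2) * (u + b * s / c ^ 2) ^ 2) := by
    intro u
    have hb0 : (0:ℝ) < 1 + b ^ 2 := by positivity
    have hexp : -u ^ 2 / 2 + -(s + b * u) ^ 2 / 2
        = -s ^ 2 / (2 * c ^ 2) + -(c ^ 2 / 2) * (u + b * s / c ^ 2) ^ 2 := by
      rw [hc2]
      field_simp
      ring
    unfold stdNormalPdf
    rw [mul_mul_mul_comm, ← Real.exp_add, hexp, Real.exp_add]
    ring
  rw [integral_congr_ae (Filter.Eventually.of_forall key), MeasureTheory.integral_const_mul,
    gauss_translate _ _ (by positivity : (0:ℝ) < c ^ 2)]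
  have h1 : Real.sqrt (2 * π / c ^ 2) = Real.sqrt (2 * π) / c := by
    rw [Real.sqrt_div (by positivity), Real.sqrt_sq hc.le]
  rw [h1]
  unfold stdNormalPdf
  have h2 : -(s / c) ^ 2 / 2 = -s ^ 2 / (2 * c ^ 2) := by
    rw [div_pow]; ring
  rw [h2]
  field_simp

lemma sNP_continuous : Continuous stdNormalPdf := by
  unfold stdNormalPdf
  fun_prop

lemma cdf_mono : Monotone stdNormalCdf := by
  intro z z' h
  exact setIntegral_mono_set sNP_integrable.integrableOn
    ((Filter.Eventually.of_forall sNP_nonneg).filter_mono (ae_mono Measure.restrict_le_self))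
    (HasSubset.Subset.eventuallyLE (Iic_subset_Iic.2 h))

lemma cdf_measurable : Measurable stdNormalCdf := cdf_mono.measurable

/-- The key identity: ∫ φ(u) Φ(a + b u) du = Φ(a/√(1+b²)). -/
lemma keyInt (a b : ℝ) :
    ∫ u : ℝ, stdNormalPdf u * stdNormalCdf (a + b * u)
      = stdNormalCdf (a / Real.sqrt (1 + b ^ 2)) := by
  set c : ℝ := Real.sqrt (1 + b ^ 2) with hcdef
  have hc : 0 < c := Real.sqrt_pos.2 (by positivity)
  -- the two-variable function
  set f : ℝ → ℝ → ℝ := fun u s => stdNormalPdf u * stdNormalPdf (s + b * u) with hf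
  have hmeas : AEStronglyMeasurable (Function.uncurry f)
      (volume.prod (volume.restrict (Iic a))) := by
    apply Continuous.aestronglyMeasurable
    exact (sNP_continuous.comp continuous_fst).mul
      (sNP_continuous.comp (continuous_snd.add (continuous_const.mul continuous_fst)))
  have hslice : ∀ u : ℝ, Integrable (fun s => f u s) (volume.restrict (Iic a)) := fun u =>
    ((sNP_integrable.comp_add_right (b * u)).restrict).const_mul _
  have hnormint : ∀ u : ℝ, (∫ s in Iic a, ‖f u s‖)
      = stdNormalPdf u * stdNormalCdf (a + b * u) := by
    intro u
    have : ∀ s : ℝ, ‖f u s‖ = f u s := fun s =>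
      Real.norm_of_nonneg (mul_nonneg (sNP_nonneg _) (sNP_nonneg _))
    rw [setIntegral_congr_fun measurableSet_Iic fun s _ => this s, hf]
    simp only
    rw [MeasureTheory.integral_const_mul, cdf_shift]
  have hint : Integrable (Function.uncurry f) (volume.prod (volume.restrict (Iic a))) := by
    rw [MeasureTheory.integrable_prod_iff hmeas]
    constructor
    · exact Filter.Eventually.of_forall hslice
    · have he : (fun u : ℝ => ∫ s in Iic a, ‖Function.uncurry f (u, s)‖)
          = fun u => stdNormalPdf u * stdNormalCdf (a + b * u) := by
        funext u
        simpa [Function.uncurry] using hnormint u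
      rw [he]
      apply Integrable.mono' sNP_integrable
      · exact ((sNP_continuous.measurable).mul
          (cdf_measurable.comp ((measurable_const.mul measurable_id).const_add a))).aestronglyMeasurable
      · refine Filter.Eventually.of_forall fun u => ?_
        rw [Real.norm_of_nonneg (mul_nonneg (sNP_nonneg _) (cdf_nonneg _))]
        calc stdNormalPdf u * stdNormalCdf (a + b * u)
            ≤ stdNormalPdf u * 1 := by
              exact mul_le_mul_of_nonneg_left (cdf_le_one _) (sNP_nonneg u)
          _ = stdNormalPdf u := mul_one _
  calc ∫ u : ℝ, stdNormalPdf u * stdNormalCdf (a + b * u)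
      = ∫ u : ℝ, ∫ s in Iic a, f u s := by
        refine integral_congr_ae (Filter.Eventually.of_forall fun u => ?_)
        rw [hf]
        simp only
        rw [MeasureTheory.integral_const_mul, cdf_shift]
    _ = ∫ s in Iic a, ∫ u : ℝ, f u s := MeasureTheory.integral_integral_swap hint
    _ = ∫ s in Iic a, c⁻¹ * stdNormalPdf (s / c) := by
        refine setIntegral_congr_fun measurableSet_Iic fun s _ => ?_
        exact gauss_product b s
    _ = stdNormalCdf (a / c) := cdf_scale a c hc

/-- Factorization of the bivariate normal density. -/
lemma biNormalPdf_factor (ρ : ℝ) (hρ : -1 < ρ) (hρ' : ρ < 1) (x y : ℝ) :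
    biNormalPdf ρ (x, y) = stdNormalPdf x *
      ((Real.sqrt (1 - ρ ^ 2))⁻¹ * stdNormalPdf ((y - ρ * x) / Real.sqrt (1 - ρ ^ 2))) := by
  set σ : ℝ := Real.sqrt (1 - ρ ^ 2) with hσdef
  have h1 : (0:ℝ) < 1 - ρ ^ 2 := by nlinarith
  have hσ : 0 < σ := Real.sqrt_pos.2 h1
  have hσ2 : σ ^ 2 = 1 - ρ ^ 2 := Real.sq_sqrt h1.le
  have hexp : -x ^ 2 / 2 + -((y - ρ * x) / σ) ^ 2 / 2
      = -(x ^ 2 - 2 * ρ * x * y + y ^ 2) / (2 * (1 - ρ ^ 2)) := by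
    rw [div_pow, hσ2]
    field_simp
    ring
  have h2π : (Real.sqrt (2 * π))⁻¹ * (Real.sqrt (2 * π))⁻¹ = (2 * π)⁻¹ := by
    rw [← mul_inv, Real.mul_self_sqrt (by positivity)]
  unfold biNormalPdf stdNormalPdf
  simp only
  rw [← hexp, Real.exp_add]
  rw [mul_inv (2 * π) σ]
  calc (2 * π)⁻¹ * σ⁻¹ * (Real.exp (-x ^ 2 / 2) * Real.exp (-((y - ρ * x) / σ) ^ 2 / 2))
      = ((Real.sqrt (2 * π))⁻¹ * (Real.sqrt (2 * π))⁻¹) * σ⁻¹ *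
        (Real.exp (-x ^ 2 / 2) * Real.exp (-((y - ρ * x) / σ) ^ 2 / 2)) := by rw [h2π]
    _ = (Real.sqrt (2 * π))⁻¹ * Real.exp (-x ^ 2 / 2) *
        (σ⁻¹ * ((Real.sqrt (2 * π))⁻¹ * Real.exp (-((y - ρ * x) / σ) ^ 2 / 2))) := by ring

/-- The marginal of the equi-skew bivariate skew normal is the univariate skew normal
SN(λ) with λ = θ(1+ρ)/√(1+θ²(1-ρ²)): the marginal density of X₁ is 2φ(x)Φ(λx). -/
theorem biSkewNormal_marginal (θ ρ : ℝ) (hρ : -1 < ρ) (hρ' : ρ < 1) :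
    ∀ x : ℝ,
      (∫ y : ℝ, biSkewNormalPdf θ ρ (x, y)) =
        2 * stdNormalPdf x *
          stdNormalCdf (θ * (1 + ρ) / Real.sqrt (1 + θ ^ 2 * (1 - ρ ^ 2)) * x) := by
  intro x
  set σ : ℝ := Real.sqrt (1 - ρ ^ 2) with hσdef
  have h1 : (0:ℝ) < 1 - ρ ^ 2 := by nlinarith
  have hσ : 0 < σ := Real.sqrt_pos.2 h1
  have hσ2 : σ ^ 2 = 1 - ρ ^ 2 := Real.sq_sqrt h1.le
  set g : ℝ → ℝ := fun u =>
    stdNormalPdf u * stdNormalCdf (θ * (1 + ρ) * x + θ * σ * u) with hg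
  have hpt : ∀ y : ℝ, biSkewNormalPdf θ ρ (x, y)
      = 2 * stdNormalPdf x * σ⁻¹ * g ((y - ρ * x) / σ) := by
    intro y
    unfold biSkewNormalPdf
    rw [biNormalPdf_factor ρ hρ hρ' x y, hg]
    simp only
    have harg : θ * (1 + ρ) * x + θ * σ * ((y - ρ * x) / σ) = θ * x + θ * y := by
      field_simp
      ring
    rw [harg]
    ring
  calc (∫ y : ℝ, biSkewNormalPdf θ ρ (x, y))
      = ∫ y : ℝ, 2 * stdNormalPdf x * σ⁻¹ * g ((y - ρ * x) / σ) :=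
        integral_congr_ae (Filter.Eventually.of_forall hpt)
    _ = 2 * stdNormalPdf x * σ⁻¹ * ∫ y : ℝ, g ((y - ρ * x) / σ) :=
        MeasureTheory.integral_const_mul _ _
    _ = 2 * stdNormalPdf x * σ⁻¹ * ∫ y : ℝ, g (y / σ) := by
        rw [MeasureTheory.integral_sub_right_eq_self (fun y => g (y / σ)) (ρ * x)]
    _ = 2 * stdNormalPdf x * σ⁻¹ * (|σ| • ∫ u : ℝ, g u) := by
        rw [MeasureTheory.Measure.integral_comp_div]
    _ = 2 * stdNormalPdf x * ∫ u : ℝ, g u := by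
        rw [abs_of_pos hσ, smul_eq_mul]
        field_simp
    _ = 2 * stdNormalPdf x *
          stdNormalCdf (θ * (1 + ρ) * x / Real.sqrt (1 + (θ * σ) ^ 2)) := by
        rw [hg, keyInt (θ * (1 + ρ) * x) (θ * σ)]
    _ = 2 * stdNormalPdf x *
          stdNormalCdf (θ * (1 + ρ) / Real.sqrt (1 + θ ^ 2 * (1 - ρ ^ 2)) * x) := by
        rw [mul_pow, hσ2]
        congr 1
        ring
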